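/- arXiv:2604.18626 — 7 statements merged into one kernel-verified Lean document; each statement's English description precedes it below -/
import Mathlib

section
/- For n ≥ 1 and 2 ≤ k ≤ n, the number of permutations of {1,...,n} with no peaks whose first entry equals k is 2^(k-2); the number with first entry equal to 1 is 1 (namely the identity permutation). -/
/-- One step-by-step implementation of the `SC_231` stack-sorting machine.
`sc231Aux input stack out`: the next input entry is pushed onto the stack unless
pushing it would create a consecutive occurrence of the pattern `231` read from
top to bottom among the stack entries (i.e. the incoming `x` on top of `y`, `z`
with `z < x < y`), in which case the top of the stack is popped and appended to
the output; once the input is exhausted the remaining stack entries are popped. -/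
def sc231Aux : List ℕ → List ℕ → List ℕ → List ℕ
  | [], stack, out => out ++ stack
  | x :: rest, y :: z :: s, out =>
      if z < x ∧ x < y then sc231Aux (x :: rest) (z :: s) (out ++ [y])
      else sc231Aux rest (x :: y :: z :: s) out
  | x :: rest, stack, out => sc231Aux rest (x :: stack) out
termination_by input stack _ => 2 * input.length + stack.length
decreasing_by all_goals (simp; try omega)

/-- The consecutive-pattern-avoiding stack sort map `SC_231`. -/
def SC231 (p : List ℕ) : List ℕ := sc231Aux p [] []

/-- The list of entries that are *pre-popped* while `SC_231` processes the
input, i.e. popped while input entries still remain. -/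
def prePopsAux : List ℕ → List ℕ → List ℕ
  | [], _ => []
  | x :: rest, y :: z :: s =>
      if z < x ∧ x < y then y :: prePopsAux (x :: rest) (z :: s)
      else prePopsAux rest (x :: y :: z :: s)
  | x :: rest, stack => prePopsAux rest (x :: stack)
termination_by input stack => 2 * input.length + stack.length
decreasing_by all_goals (simp; try omega)

def prePops (p : List ℕ) : List ℕ := prePopsAux p []

/-- `p` has a peak: an interior position whose entry exceeds both neighbours. -/
def HasPeak (p : List ℕ) : Prop :=
  ∃ i, i + 2 < p.length ∧ p[i]! < p[i+1]! ∧ p[i+2]! < p[i+1]!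

/-- `p` is a permutation of `{1, …, n}` (written as a list of its entries). -/
def IsPermOf (n : ℕ) (p : List ℕ) : Prop := p.Perm (List.range' 1 n)

/-- `p` contains the (classical) pattern `q`. -/
def ContainsPat (p q : List ℕ) : Prop :=
  ∃ s : List ℕ, s.Sublist p ∧ s.length = q.length ∧
    ∀ i j, i < s.length → j < s.length → (s[i]! < s[j]! ↔ q[i]! < q[j]!)

def AvoidsPat (p q : List ℕ) : Prop := ¬ ContainsPat p q

/-- The sort-number of `p`: the least `k` with `SC_231^k(p)` peakless. -/
noncomputable def sortNum (p : List ℕ) : ℕ := sInf {k | ¬ HasPeak (SC231^[k] p)}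

/-!
A peak-free list of distinct numbers falls and then rises, so a peak-free permutation of
`{1, …, n}` is `D` in decreasing order, then `1`, then `{2, …, n} \ D` in increasing order,
and it is determined by the set `D ⊆ {2, …, n}` of entries before `1`. Its first entry is
`max D`, or `1` when `D = ∅`; so the permutations starting with `k ≥ 2` correspond to the sets
`D = {k} ∪ S` with `S ⊆ {2, …, k - 1}`, and the only one starting with `1` is the identity.
-/

open Finset

theorem HasPeak.cons {l : List ℕ} (x : ℕ) (h : HasPeak l) : HasPeak (x :: l) := by
  obtain ⟨i, hi, h1, h2⟩ := h
  exact ⟨i + 1, by simp; omega, by simpa using h1, by simpa using h2⟩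

theorem hasPeak_cons_cons_cons {x y z : ℕ} (l : List ℕ) (hxy : x < y) (hzy : z < y) :
    HasPeak (x :: y :: z :: l) :=
  ⟨0, by simp, by simpa using hxy, by simpa using hzy⟩

theorem exists_eq_append_of_not_hasPeak {l : List ℕ} (hnd : l.Nodup) (hl : ¬ HasPeak l) :
    ∃ a b, l = a ++ b ∧ a.Pairwise (· > ·) ∧ b.Pairwise (· < ·) := by
  induction l with
  | nil => exact ⟨[], [], rfl, .nil, .nil⟩
  | cons x t ih =>
    obtain ⟨hxt, hnd⟩ := List.nodup_cons.1 hnd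
    obtain ⟨a, b, rfl, ha, hb⟩ := ih hnd (fun h => hl (h.cons x))
    rcases a with _ | ⟨y, a⟩
    · exact ⟨[x], b, rfl, List.pairwise_singleton _ _, hb⟩
    rcases lt_or_gt_of_ne (show x ≠ y by simp_all) with hxy | hyx
    · obtain rfl : a = [] := by
        rcases a with _ | ⟨w, a⟩
        · rfl
        · exact absurd (hasPeak_cons_cons_cons _ hxy (by simp_all)) hl
      refine ⟨[x], y :: b, rfl, List.pairwise_singleton _ _, List.pairwise_cons.2 ⟨?_, hb⟩⟩
      rcases b with _ | ⟨z, b⟩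
      · simp
      have hyz : y < z := by
        have : y ≠ z := by simp_all
        have : ¬ z < y := fun hzy => hl (hasPeak_cons_cons_cons _ hxy hzy)
        omega
      simp only [List.mem_cons, forall_eq_or_imp]
      exact ⟨hyz, fun w hw => hyz.trans (List.rel_of_pairwise_cons hb hw)⟩
    · refine ⟨x :: y :: a, b, rfl, List.pairwise_cons.2 ⟨?_, ha⟩, hb⟩
      simp only [List.mem_cons, forall_eq_or_imp]
      exact ⟨hyx, fun w hw => (List.rel_of_pairwise_cons ha hw).trans hyx⟩

theorem not_hasPeak_append {a b : List ℕ} (ha : a.Pairwise (· > ·)) (hb : b.Pairwise (· < ·)) :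
    ¬ HasPeak (a ++ b) := by
  rintro ⟨i, hi, h1, h2⟩
  rw [List.length_append] at hi
  rw [getElem!_pos (a ++ b) i (by simp; omega),
    getElem!_pos (a ++ b) (i + 1) (by simp; omega)] at h1
  rw [getElem!_pos (a ++ b) (i + 2) (by simp; omega),
    getElem!_pos (a ++ b) (i + 1) (by simp; omega)] at h2
  rcases lt_or_ge (i + 1) a.length with hia | hia
  · rw [List.getElem_append_left (by omega), List.getElem_append_left hia] at h1
    exact (List.pairwise_iff_getElem.1 ha i (i + 1) _ _ (by omega)).asymm h1
  · rw [List.getElem_append_right hia, List.getElem_append_right (by omega)] at h2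
    refine (List.pairwise_iff_getElem.1 hb (i + 1 - a.length) (i + 2 - a.length) _ _
      (by omega)).asymm h2

theorem exists_eq_append_cons_of_not_hasPeak {p : List ℕ} (hnd : p.Nodup) (hp : ¬ HasPeak p)
    {m : ℕ} (hm : m ∈ p) (hmin : ∀ x ∈ p, m ≤ x) :
    ∃ a b, p = a ++ m :: b ∧ (a ++ [m]).Pairwise (· > ·) ∧ (m :: b).Pairwise (· < ·) := by
  have hlt : ∀ x ∈ p, x ≠ m → m < x := fun x hx hxm => lt_of_le_of_ne (hmin x hx) hxm.symm
  obtain ⟨a, b, rfl, ha, hb⟩ := exists_eq_append_of_not_hasPeak hnd hp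
  have hdisj := (List.nodup_append.1 hnd).2.2
  rcases List.mem_append.1 hm with hma | hmb
  · obtain ⟨a, c, rfl⟩ := List.append_of_mem hma
    obtain rfl : c = [] := List.eq_nil_iff_forall_not_mem.2 fun w hw =>
      (hmin w (by simp [hw])).not_gt (List.rel_of_pairwise_cons (List.pairwise_append.1 ha).2.1 hw)
    refine ⟨a, b, by simp, ha, List.pairwise_cons.2 ⟨fun y hy => hlt y (by simp [hy]) ?_, hb⟩⟩
    exact (hdisj m hma y hy).symm
  · obtain ⟨c, b, rfl⟩ := List.append_of_mem hmb
    obtain rfl : c = [] := List.eq_nil_iff_forall_not_mem.2 fun w hw =>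
      (hmin w (by simp [hw])).not_gt ((List.pairwise_append.1 hb).2.2 w hw m (by simp))
    refine ⟨a, b, by simp, List.pairwise_append.2 ⟨ha, List.pairwise_singleton _ _, ?_⟩,
      (List.pairwise_append.1 hb).2.1⟩
    simp only [List.mem_singleton, forall_eq]
    exact fun x hx => hlt x (by simp [hx]) (hdisj x hx m hmb)

theorem isPermOf_iff {n : ℕ} {p : List ℕ} :
    IsPermOf n p ↔ p.Nodup ∧ ∀ x, x ∈ p ↔ 1 ≤ x ∧ x ≤ n := by
  constructor
  · intro hp
    refine ⟨hp.nodup_iff.2 List.nodup_range', fun x => ?_⟩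
    rw [hp.mem_iff, List.mem_range'_1]
    omega
  · rintro ⟨hnd, hmem⟩
    refine (List.perm_ext_iff_of_nodup hnd List.nodup_range').2 fun x => ?_
    rw [hmem, List.mem_range'_1]
    omega

theorem IsPermOf.exists_eq_append_one_cons {n : ℕ} {p : List ℕ} (hp : IsPermOf n p)
    (hn : 1 ≤ n) (hnp : ¬ HasPeak p) :
    ∃ a b, p = a ++ 1 :: b ∧ (a ++ [1]).Pairwise (· > ·) ∧ (1 :: b).Pairwise (· < ·) := by
  obtain ⟨hnd, hmem⟩ := isPermOf_iff.1 hp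
  exact exists_eq_append_cons_of_not_hasPeak hnd hnp ((hmem 1).2 ⟨le_rfl, hn⟩)
    fun x hx => ((hmem x).1 hx).1

def valleyPerm (n : ℕ) (D : Finset ℕ) : List ℕ :=
  D.sort (· ≥ ·) ++ 1 :: (Icc 2 n \ D).sort

theorem valleyPerm_isPermOf {n : ℕ} {D : Finset ℕ} (hn : 1 ≤ n) (hD : D ⊆ Icc 2 n) :
    IsPermOf n (valleyPerm n D) := by
  have h1 : 1 ∉ D := fun h => by simpa using hD h
  refine isPermOf_iff.2 ⟨?_, fun x => ?_⟩
  · refine List.nodup_append.2 ⟨sort_nodup _ _, List.nodup_cons.2 ⟨by simp, sort_nodup _ _⟩, ?_⟩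
    simp only [mem_sort, List.mem_cons, mem_sdiff]
    rintro x hx _ (rfl | ⟨_, hxD⟩) rfl
    exacts [h1 hx, hxD hx]
  · have := fun h : x ∈ D => mem_Icc.1 (hD h)
    simp only [valleyPerm, List.mem_append, mem_sort, List.mem_cons, mem_sdiff, mem_Icc]
    grind

theorem not_hasPeak_valleyPerm {n : ℕ} {D : Finset ℕ} (hD : D ⊆ Icc 2 n) :
    ¬ HasPeak (valleyPerm n D) := by
  have h : valleyPerm n D = (D.sort (· ≥ ·) ++ [1]) ++ (Icc 2 n \ D).sort := by
    simp [valleyPerm]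
  rw [h]
  refine not_hasPeak_append (List.pairwise_append.2 ⟨(sortedGT_sort D).pairwise,
    List.pairwise_singleton _ _, ?_⟩) (sortedLT_sort _).pairwise
  simp only [mem_sort, List.mem_singleton, forall_eq]
  exact fun x hx => (mem_Icc.1 (hD hx)).1

theorem eq_valleyPerm {n : ℕ} {a b : List ℕ} (hp : IsPermOf n (a ++ 1 :: b))
    (ha : (a ++ [1]).Pairwise (· > ·)) (hb : (1 :: b).Pairwise (· < ·)) :
    a ++ 1 :: b = valleyPerm n a.toFinset := by
  obtain ⟨hnd, hmem⟩ := isPermOf_iff.1 hp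
  have ha' : a.toFinset.sort (· ≥ ·) = a := by
    have ha := (List.pairwise_append.1 ha).1
    exact (List.toFinset_sort _ ha.nodup).2 (ha.imp le_of_lt)
  have hb' : (Icc 2 n \ a.toFinset).sort = b := by
    have hset : Icc 2 n \ a.toFinset = b.toFinset := by
      ext x
      have hx := hmem x
      have h1x : x ∈ b → 1 < x := fun h => List.rel_of_pairwise_cons hb h
      have hxab : x ∈ a → x ∉ 1 :: b := fun h h' =>
        (List.nodup_append.1 hnd).2.2 x h x h' rfl
      simp only [mem_sdiff, mem_Icc, List.mem_toFinset]
      grind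
    have hb := (List.pairwise_cons.1 hb).2
    rw [hset]
    exact (List.toFinset_sort _ hb.nodup).2 (hb.imp le_of_lt)
  rw [valleyPerm, ha', hb']

theorem injOn_valleyPerm (n : ℕ) : Set.InjOn (valleyPerm n) {D | 1 ∉ D} := by
  have key : ∀ D : Finset ℕ, 1 ∉ D → ((valleyPerm n D).takeWhile (· ≠ 1)).toFinset = D := by
    intro D hD
    have hne : ∀ x ∈ D.sort (· ≥ ·), decide (x ≠ 1) = true := fun x hx =>
      decide_eq_true fun h => hD (h ▸ (mem_sort _).1 hx)
    rw [valleyPerm, List.takeWhile_append_of_pos hne]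
    simp
  intro D hD D' hD' h
  rw [← key D hD, ← key D' hD', h]

theorem insert_subset_Icc_two {n k : ℕ} {S : Finset ℕ} (hk : 2 ≤ k) (hkn : k ≤ n)
    (hS : S ⊆ Icc 2 (k - 1)) : insert k S ⊆ Icc 2 n := by
  refine insert_subset_iff.2 ⟨mem_Icc.2 ⟨hk, hkn⟩, fun x hx => ?_⟩
  have := mem_Icc.1 (hS hx)
  exact mem_Icc.2 ⟨this.1, by omega⟩

theorem injOn_valleyPerm_insert (n : ℕ) {k : ℕ} (hk : 2 ≤ k) :
    Set.InjOn (fun S => valleyPerm n (insert k S)) ↑(Icc 2 (k - 1)).powerset := by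
  have hT : ∀ T ∈ (↑(Icc 2 (k - 1)).powerset : Set (Finset ℕ)), k ∉ T ∧ 1 ∉ insert k T := by
    intro T hT
    have h : ∀ x ∈ T, 1 < x ∧ x < k := fun x hx => by
      have := mem_Icc.1 (mem_powerset.1 hT hx); omega
    refine ⟨fun hkT => (h k hkT).2.false, ?_⟩
    rw [mem_insert, not_or]
    exact ⟨by omega, fun h1 => (h 1 h1).1.false⟩
  intro S hS S' hS' h
  rw [← erase_insert (hT S hS).1, injOn_valleyPerm n (hT S hS).2 (hT S' hS').2 h,
    erase_insert (hT S' hS').1]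

theorem head?_valleyPerm_insert {n k : ℕ} {S : Finset ℕ} (hS : ∀ x ∈ S, x < k) :
    (valleyPerm n (insert k S)).head? = some k := by
  rw [valleyPerm, sort_insert _ (fun x hx => (hS x hx).le) fun h => (hS k h).false]
  rfl

theorem setOf_peakless_head_eq_image {n k : ℕ} (hk : 2 ≤ k) (hkn : k ≤ n) :
    {p | IsPermOf n p ∧ ¬ HasPeak p ∧ p.head? = some k} =
      (fun S => valleyPerm n (insert k S)) '' ↑(Icc 2 (k - 1)).powerset := by
  ext p
  simp only [Set.mem_ofPred_eq, Set.mem_image, mem_coe, mem_powerset]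
  constructor
  · rintro ⟨hp, hnp, hhead⟩
    obtain ⟨a, b, rfl, ha, hb⟩ := hp.exists_eq_append_one_cons (by omega) hnp
    obtain ⟨a, rfl⟩ : ∃ a', a = k :: a' := by
      rcases a with _ | ⟨x, a⟩
      · exact absurd (Option.some.inj hhead) (by omega)
      · exact ⟨a, by rw [Option.some.inj hhead]⟩
    refine ⟨a.toFinset, fun x hx => ?_, by rw [eq_valleyPerm hp ha hb, List.toFinset_cons]⟩
    have hxk := List.rel_of_pairwise_cons ha (by simp_all : x ∈ a ++ [1])
    have hx1 := (List.pairwise_append.1 ha).2.2 x (by simp_all) 1 (by simp)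
    simp only [mem_Icc]
    omega
  · rintro ⟨S, hS, rfl⟩
    have hkS := insert_subset_Icc_two hk hkn hS
    refine ⟨valleyPerm_isPermOf (by omega) hkS, not_hasPeak_valleyPerm hkS,
      head?_valleyPerm_insert fun x hx => ?_⟩
    have := mem_Icc.1 (hS hx)
    omega

theorem setOf_peakless_head_one {n : ℕ} (hn : 1 ≤ n) :
    {p | IsPermOf n p ∧ ¬ HasPeak p ∧ p.head? = some 1} = {List.range' 1 n} := by
  ext p
  simp only [Set.mem_ofPred_eq, Set.mem_singleton_iff]
  constructor
  · rintro ⟨hp, hnp, hhead⟩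
    obtain ⟨a, b, rfl, ha, hb⟩ := hp.exists_eq_append_one_cons hn hnp
    obtain rfl : a = [] := by
      rcases a with _ | ⟨x, a⟩
      · rfl
      · have := List.rel_of_pairwise_cons ha (List.mem_append_right a (List.mem_singleton_self 1))
        have := Option.some.inj hhead
        omega
    exact hp.eq_of_pairwise' hb List.pairwise_lt_range'
  · rintro rfl
    obtain ⟨m, rfl⟩ := Nat.exists_eq_add_of_le' hn
    exact ⟨List.Perm.refl _, by simpa using not_hasPeak_append .nil List.pairwise_lt_range',
      by simp [List.range'_succ]⟩

theorem card_peakless_perms_by_first_entry_general (n k : ℕ) (hkn : k ≤ n) :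
    (2 ≤ k →
      {p : List ℕ | IsPermOf n p ∧ ¬ HasPeak p ∧ p.head? = some k}.ncard = 2 ^ (k - 2)) ∧
    (k = 1 →
      {p : List ℕ | IsPermOf n p ∧ ¬ HasPeak p ∧ p.head? = some k} = {List.range' 1 n}) := by
  refine ⟨fun hk => ?_, fun hk => by subst hk; exact setOf_peakless_head_one hkn⟩
  rw [setOf_peakless_head_eq_image hk hkn, (injOn_valleyPerm_insert n hk).ncard_image,
    Set.ncard_coe_finset, card_powerset, Nat.card_Icc]
  congr 1

/-- For `2 ≤ k ≤ n`, there are exactly `2^(k-2)` peakless permutations of `{1,…,n}`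
with first entry `k`; for `k = 1` the only one is the identity permutation. -/
theorem card_peakless_perms_by_first_entry (n k : ℕ) (hn : 1 ≤ n) (hkn : k ≤ n) :
    (2 ≤ k →
      {p : List ℕ | IsPermOf n p ∧ ¬ HasPeak p ∧ p.head? = some k}.ncard = 2 ^ (k - 2)) ∧
    (k = 1 →
      {p : List ℕ | IsPermOf n p ∧ ¬ HasPeak p ∧ p.head? = some k} = {List.range' 1 n}) :=
  card_peakless_perms_by_first_entry_general n k hkn
end

section
/- There is no permutation of {1,...,n} (n ≥ 2) with index exactly n-1, where the index of a permutation p is the largest m ≤ n such that for every 2 ≤ j ≤ m, the entry j is adjacent (in position) to some entry i with i < j (and index 1 if entries 1 and 2 are not adjacent). -/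
/-- The *index* of a permutation `p` of `{1,…,n}`: the largest `m ≤ n` such that for every
`2 ≤ j ≤ m` the entry `j` is positionally adjacent to some smaller entry `i ≥ 1`. -/
noncomputable def permIndex (n : ℕ) (p : List ℕ) : ℕ :=
  sSup {m | m ≤ n ∧ ∀ j, 2 ≤ j → j ≤ m →
    ∃ i, 1 ≤ i ∧ i < j ∧ (p.idxOf i + 1 = p.idxOf j ∨ p.idxOf j + 1 = p.idxOf i)}

/-- No permutation of `{1,…,n}` (`n ≥ 2`) has index exactly `n - 1`. -/
theorem no_index_n_sub_one (n : ℕ) (hn : 2 ≤ n) (p : List ℕ) (hp : IsPermOf n p) :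
    permIndex n p ≠ n - 1 := by
  intro hEq
  set S := {m | m ≤ n ∧ ∀ j, 2 ≤ j → j ≤ m →
    ∃ i, 1 ≤ i ∧ i < j ∧ (p.idxOf i + 1 = p.idxOf j ∨ p.idxOf j + 1 = p.idxOf i)}
    with hS
  have hlen : p.length = n := by
    have := hp.length_eq; simpa using this
  have hnd : p.Nodup := hp.nodup_iff.2 (List.nodup_range' (s := 1) (n := n))
  have hmem : ∀ x, x ∈ p ↔ 1 ≤ x ∧ x ≤ n := by
    intro x
    rw [hp.mem_iff, List.mem_range'_1]
    omega
  have hne : S.Nonempty := ⟨0, ⟨by omega, fun j hj hj0 => by omega⟩⟩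
  have hbdd : BddAbove S := ⟨n, fun m hm => hm.1⟩
  have hsup : sSup S ∈ S := Nat.sSup_mem hne hbdd
  have hEq' : sSup S = n - 1 := hEq
  rw [hEq'] at hsup
  have hpn : n ∈ p := (hmem n).2 ⟨by omega, le_rfl⟩
  have hk : p.idxOf n < p.length := List.idxOf_lt_length_iff.2 hpn
  set k := p.idxOf n with hkdef
  have hnS : n ∈ S := by
    refine ⟨le_rfl, fun j hj2 hjn => ?_⟩
    rcases lt_or_eq_of_le hjn with hjlt | hjeq
    · exact hsup.2 j hj2 (by omega)
    · by_cases hcase : k + 1 < p.length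
      · have h1 : 1 ≤ p[k+1]'hcase := ((hmem _).1 (List.getElem_mem hcase)).1
        have h2 : p[k+1]'hcase ≤ n := ((hmem _).1 (List.getElem_mem hcase)).2
        have hidx : p.idxOf (p[k+1]'hcase) = k + 1 :=
          hnd.idxOf_getElem (k+1) hcase
        have hne' : p[k+1]'hcase ≠ n := by
          intro h; rw [h] at hidx; omega
        refine ⟨p[k+1]'hcase, h1, by omega, Or.inr ?_⟩
        rw [hidx, hjeq, ← hkdef]
      · have hk1 : 1 ≤ k := by omega
        have hcase' : k - 1 < p.length := by omega
        have h1 : 1 ≤ p[k-1]'hcase' := ((hmem _).1 (List.getElem_mem hcase')).1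
        have h2 : p[k-1]'hcase' ≤ n := ((hmem _).1 (List.getElem_mem hcase')).2
        have hidx : p.idxOf (p[k-1]'hcase') = k - 1 :=
          hnd.idxOf_getElem (k-1) hcase'
        have hne' : p[k-1]'hcase' ≠ n := by
          intro h; rw [h] at hidx; omega
        refine ⟨p[k-1]'hcase', h1, by omega, Or.inl ?_⟩
        rw [hidx, hjeq, ← hkdef]
        omega
  have := le_csSup hbdd hnS
  omega
end

section
/- If a permutation p of {1,...,n} has some entry strictly between the positions of the values 1 and 2, then p has a peak at some position strictly between the positions of 1 and 2 (inclusive of the interior). -/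
theorem exists_peak_of_endpoints_lt {α : Type*} [LinearOrder α] {f : ℕ → α} {a b : ℕ}
    (hab : a + 1 < b) (hinj : Set.InjOn f (Set.Ioo a b))
    (ha : ∀ k ∈ Set.Ioo a b, f a < f k) (hb : ∀ k ∈ Set.Ioo a b, f b < f k) :
    ∃ j ∈ Set.Ioo a b, f (j - 1) < f j ∧ f (j + 1) < f j := by
  obtain ⟨j, hj, hmax⟩ := (Finset.Ioo a b).exists_max_image f ⟨a + 1, by simp; omega⟩
  rw [Finset.mem_Ioo] at hj
  have lt_of_near : ∀ i, a ≤ i → i ≤ b → i ≠ j → f i < f j := by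
    intro i hai hib hij
    obtain rfl | hai := hai.eq_or_lt
    · exact ha j hj
    obtain rfl | hib := hib.eq_or_lt
    · exact hb j hj
    exact (hmax i (Finset.mem_Ioo.2 ⟨hai, hib⟩)).lt_of_ne fun h => hij (hinj ⟨hai, hib⟩ hj h)
  exact ⟨j, hj, lt_of_near _ (by omega) (by omega) (by omega),
    lt_of_near _ (by omega) (by omega) (by omega)⟩

theorem List.Nodup.injOn_getElem! {α : Type*} [Inhabited α] {l : List α} (h : l.Nodup) :
    Set.InjOn (fun k => l[k]!) (Set.Iio l.length) := by
  intro i hi j hj hij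
  simp only [Set.mem_Iio] at hi hj
  simpa [getElem!_pos l i hi, getElem!_pos l j hj, h.getElem_inj_iff] using hij

theorem List.getElem!_idxOf {α : Type*} [BEq α] [LawfulBEq α] [Inhabited α] {l : List α} {x : α}
    (h : x ∈ l) : l[l.idxOf x]! = x := by
  rw [getElem!_pos l _ (idxOf_lt_length_iff.2 h), getElem_idxOf]

namespace IsPermOf

variable {n : ℕ} {p : List ℕ}

theorem nodup (hp : IsPermOf n p) : p.Nodup :=
  hp.nodup_iff.2 List.nodup_range'

theorem mem_iff (hp : IsPermOf n p) {x : ℕ} : x ∈ p ↔ 1 ≤ x ∧ x < 1 + n :=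
  List.Perm.mem_iff hp |>.trans List.mem_range'_1

theorem three_le_getElem! (hp : IsPermOf n p) {k : ℕ} (hk : k < p.length)
    (h1 : k ≠ p.idxOf 1) (h2 : k ≠ p.idxOf 2) : 3 ≤ p[k]! := by
  rw [getElem!_pos p k hk]
  have hpos := (hp.mem_iff.1 (p.getElem_mem hk)).1
  have hidx := hp.nodup.idxOf_getElem k hk
  have : p[k] ≠ 1 := fun h => h1 (by rw [← h, hidx])
  have : p[k] ≠ 2 := fun h => h2 (by rw [← h, hidx])
  omega

end IsPermOf

/-- If some entry lies strictly between the positions of the values `1` and `2` in a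
permutation `p` of `{1,…,n}`, then `p` has a peak at a position strictly between the
positions of `1` and `2`. -/
theorem peak_between_one_and_two (n : ℕ) (hn : 2 ≤ n) (p : List ℕ) (hp : IsPermOf n p)
    (h : min (p.idxOf 1) (p.idxOf 2) + 1 < max (p.idxOf 1) (p.idxOf 2)) :
    ∃ j, min (p.idxOf 1) (p.idxOf 2) < j ∧ j < max (p.idxOf 1) (p.idxOf 2) ∧
      0 < j ∧ j + 1 < p.length ∧ p[j-1]! < p[j]! ∧ p[j+1]! < p[j]! := by
  have h1 : 1 ∈ p := hp.mem_iff.2 (by omega)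
  have h2 : 2 ∈ p := hp.mem_iff.2 (by omega)
  have hlen : max (p.idxOf 1) (p.idxOf 2) < p.length :=
    max_lt (List.idxOf_lt_length_iff.2 h1) (List.idxOf_lt_length_iff.2 h2)
  have endpoint_le_two : ∀ i, (i = p.idxOf 1 ∨ i = p.idxOf 2) → p[i]! ≤ 2 := by
    rintro i (rfl | rfl)
    · rw [List.getElem!_idxOf h1]; omega
    · rw [List.getElem!_idxOf h2]
  have interior_ge_three :
      ∀ k ∈ Set.Ioo (min (p.idxOf 1) (p.idxOf 2)) (max (p.idxOf 1) (p.idxOf 2)), 3 ≤ p[k]! :=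
    fun k ⟨hak, hkb⟩ => hp.three_le_getElem! (by omega) (by omega) (by omega)
  obtain ⟨j, ⟨haj, hjb⟩, hleft, hright⟩ := exists_peak_of_endpoints_lt h
    (hp.nodup.injOn_getElem!.mono fun k hk => lt_trans hk.2 hlen)
    (fun k hk => (endpoint_le_two _ (min_choice _ _)).trans_lt (interior_ge_three k hk))
    (fun k hk => (endpoint_le_two _ (max_choice _ _)).trans_lt (interior_ge_three k hk))
  exact ⟨j, haj, hjb, by omega, by omega, hleft, hright⟩
end

section
/- For the permutation V_n (all numbers in {1,...,n} of the same parity as n in increasing order, followed by the remaining numbers in decreasing order), SC_231(V_n) equals n followed by V_{n-1} (with V_{n-1} on values {1,...,n-1}). -/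
/-- `V_n`: the numbers in `{1,…,n}` with the same parity as `n` in increasing order,
followed by the remaining numbers in decreasing order (e.g. `V_6 = 246531`). -/
def Vperm (n : ℕ) : List ℕ :=
  ((List.range' 1 n).filter (fun i => i % 2 == n % 2)) ++
    (((List.range' 1 n).filter (fun i => i % 2 != n % 2)).reverse)

/-!
Write `V_{m+3} = A ++ [m+1, m+3] ++ (m+2) :: Bᵀ`, where `A` and `B` are the increasing lists of
entries `≤ m` of the parity of `m+1` and of `m`. `SC_231` pushes the increasing prefix without
popping; `m+2` lies between `m+1` and `m+3`, so it pops `m+3` and is pushed; the decreasing tail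
`Bᵀ`, all below `m+1`, is then pushed without popping. Emptying the stack leaves
`m+3` followed by `B ++ (m+2) :: (m+1) :: Aᵀ = V_{m+2}`.
-/

lemma sc231Aux_nil (stack out : List ℕ) : sc231Aux [] stack out = out ++ stack := by
  rw [sc231Aux]

lemma sc231Aux_push {x : ℕ} {stack : List ℕ} (rest out : List ℕ)
    (h : ∀ y z s, stack = y :: z :: s → ¬ (z < x ∧ x < y)) :
    sc231Aux (x :: rest) stack out = sc231Aux rest (x :: stack) out := by
  match stack with
  | [] | [_] => rw [sc231Aux]; simp
  | y :: z :: s => rw [sc231Aux, if_neg (h y z s rfl)]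

lemma sc231Aux_pop {x y z : ℕ} (rest s out : List ℕ) (hzx : z < x) (hxy : x < y) :
    sc231Aux (x :: rest) (y :: z :: s) out = sc231Aux (x :: rest) (z :: s) (out ++ [y]) := by
  rw [sc231Aux, if_pos ⟨hzx, hxy⟩]

lemma sc231Aux_append_of_pairwise_le {L : List ℕ} (hL : L.Pairwise (· ≤ ·))
    (rest : List ℕ) {stack : List ℕ} (out : List ℕ) (hstack : ∀ x ∈ L, ∀ y ∈ stack, y ≤ x) :
    sc231Aux (L ++ rest) stack out = sc231Aux rest (L.reverse ++ stack) out := by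
  induction L generalizing stack with
  | nil => rfl
  | cons x L ih =>
    rw [List.pairwise_cons] at hL
    rw [List.cons_append, sc231Aux_push _ _ (by
      rintro y z s rfl
      have := hstack x List.mem_cons_self y List.mem_cons_self
      omega)]
    rw [ih hL.2 (by
      intro a ha b hb
      rcases List.mem_cons.mp hb with rfl | hb
      · exact hL.1 a ha
      · exact hstack a (List.mem_cons_of_mem x ha) b hb)]
    simp

lemma sc231Aux_of_pairwise_gt {L : List ℕ} (hL : L.Pairwise (· > ·)) {y z : ℕ}
    (s out : List ℕ) (hyz : ∀ x ∈ L, x < y ∧ x < z) :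
    sc231Aux L (y :: z :: s) out = out ++ L.reverse ++ y :: z :: s := by
  induction L generalizing y z s with
  | nil => simp [sc231Aux_nil]
  | cons x L ih =>
    rw [List.pairwise_cons] at hL
    have hx := hyz x List.mem_cons_self
    rw [sc231Aux_push _ _ (by
      rintro y' z' s' h
      obtain ⟨rfl, rfl, -⟩ : y' = y ∧ z' = z ∧ s' = s := by simpa using h.symm
      omega)]
    rw [ih hL.2 (z :: s) fun a ha => ⟨hL.1 a ha, (hyz a (List.mem_cons_of_mem x ha)).1⟩]
    simp

theorem SC231_append_cons_reverse {A B : List ℕ} {a b c : ℕ} (hA : (A ++ [a, c]).Pairwise (· ≤ ·))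
    (hB : B.Pairwise (· < ·)) (hBa : ∀ x ∈ B, x < a) (hab : a < b) (hbc : b < c) :
    SC231 (A ++ [a, c] ++ b :: B.reverse) = c :: B ++ b :: a :: A.reverse := by
  have hBrev : B.reverse.Pairwise (· > ·) := List.pairwise_reverse.mpr hB
  rw [SC231, sc231Aux_append_of_pairwise_le hA _ _ (by simp)]
  simp only [List.reverse_append, List.reverse_cons, List.reverse_nil, List.nil_append,
    List.cons_append, List.append_nil]
  rw [sc231Aux_pop _ _ _ hab hbc, sc231Aux_push _ _ (by
      rintro y z s h
      obtain ⟨rfl, -⟩ := List.cons_eq_cons.mp h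
      omega),
    sc231Aux_of_pairwise_gt hBrev _ _ fun x hx => by
      have := hBa x (List.mem_reverse.mp hx)
      omega]
  simp

def sameParity (n : ℕ) : List ℕ := (List.range' 1 n).filter (fun i => i % 2 == n % 2)

def oppParity (n : ℕ) : List ℕ := (List.range' 1 n).filter (fun i => i % 2 != n % 2)

lemma Vperm_eq (n : ℕ) : Vperm n = sameParity n ++ (oppParity n).reverse := rfl

lemma sameParity_succ (n : ℕ) : sameParity (n + 1) = oppParity n ++ [n + 1] := by
  rw [sameParity, oppParity, List.range'_concat, List.filter_append, Nat.one_mul, Nat.add_comm 1 n]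
  congr 1
  · refine List.filter_congr fun i _ => ?_
    rw [Bool.eq_iff_iff, beq_iff_eq, bne_iff_ne]
    omega
  · simp

lemma oppParity_succ (n : ℕ) : oppParity (n + 1) = sameParity n := by
  rw [sameParity, oppParity, List.range'_concat, List.filter_append, Nat.one_mul, Nat.add_comm 1 n]
  simp only [bne_self_eq_false, List.filter_singleton, cond_false, List.append_nil]
  refine List.filter_congr fun i _ => ?_
  rw [Bool.eq_iff_iff, beq_iff_eq, bne_iff_ne]
  omega

lemma pairwise_lt_filter_range' (n : ℕ) (p : ℕ → Bool) :
    ((List.range' 1 n).filter p).Pairwise (· < ·) :=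
  (List.pairwise_lt_range' 1 (by omega)).filter p

lemma le_of_mem_filter_range' {n x : ℕ} {p : ℕ → Bool} (hx : x ∈ (List.range' 1 n).filter p) :
    x ≤ n := by
  rw [List.mem_filter, List.mem_range'_1] at hx
  omega

lemma Vperm_add_three (m : ℕ) :
    Vperm (m + 3) = oppParity m ++ [m + 1, m + 3] ++ (m + 2) :: (sameParity m).reverse := by
  simp [Vperm_eq, sameParity_succ, oppParity_succ]

lemma Vperm_add_two (m : ℕ) :
    Vperm (m + 2) = sameParity m ++ (m + 2) :: (m + 1) :: (oppParity m).reverse := by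
  simp [Vperm_eq, sameParity_succ, oppParity_succ]

/-- `SC_231(V_n) = n` followed by `V_{n-1}`. -/
theorem SC231_Vperm (n : ℕ) (hn : 3 ≤ n) :
    SC231 (Vperm n) = n :: Vperm (n - 1) := by
  obtain ⟨m, rfl⟩ : ∃ m, n = m + 3 := ⟨n - 3, by omega⟩
  have hA : (oppParity m ++ [m + 1, m + 3]).Pairwise (· ≤ ·) := by
    refine List.pairwise_append.mpr
      ⟨(pairwise_lt_filter_range' m _).imp le_of_lt, by simp, fun x hx y hy => ?_⟩
    have := le_of_mem_filter_range' hx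
    simp only [List.mem_cons, List.not_mem_nil, or_false] at hy
    omega
  rw [Vperm_add_three, show m + 3 - 1 = m + 2 by omega, Vperm_add_two]
  exact SC231_append_cons_reverse hA (pairwise_lt_filter_range' m _)
    (fun x hx => Nat.lt_succ_of_le (le_of_mem_filter_range' hx)) (by omega) (by omega)
end

section
/- No permutation p of {1,...,n} whose first entry is 1 has sort-number exactly 2 under SC_231. -/
/-! If `p` starts with `1`, that entry is pushed first and stays at the bottom of the stack, so
`SC_231(p)` ends with its minimum `1`. For a word of distinct entries ending in its minimum, a
peak survives a pass of `SC_231`. So if `SC_231(p)` has a peak, so does `SC_231²(p)`, and the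
sort-number cannot be `2`. -/

theorem hasPeak_iff_eq_append {l : List ℕ} :
    HasPeak l ↔ ∃ s a b c t, l = s ++ a :: b :: c :: t ∧ a < b ∧ c < b := by
  constructor
  · rintro ⟨i, hi, hab, hcb⟩
    refine ⟨l.take i, l[i], l[i + 1], l[i + 2], l.drop (i + 3), ?_, ?_, ?_⟩
    · conv_lhs => rw [← List.take_append_drop i l]
      rw [List.drop_eq_getElem_cons (by omega), List.drop_eq_getElem_cons (by omega),
        List.drop_eq_getElem_cons (by omega)]
    · simpa [getElem!_pos, show i < l.length by omega, show i + 1 < l.length by omega] using hab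
    · simpa [getElem!_pos, hi, show i + 1 < l.length by omega] using hcb
  · rintro ⟨s, a, b, c, t, rfl, hab, hcb⟩
    refine ⟨s.length, by simp, ?_, ?_⟩ <;> simp [getElem!_pos, List.getElem_append_right, *]

theorem HasPeak.append_left {l : List ℕ} (s : List ℕ) (h : HasPeak l) : HasPeak (s ++ l) := by
  obtain ⟨s', a, b, c, t, rfl, hab, hcb⟩ := hasPeak_iff_eq_append.1 h
  exact hasPeak_iff_eq_append.2 ⟨s ++ s', a, b, c, t, by simp, hab, hcb⟩

theorem HasPeak.reverse {l : List ℕ} (h : HasPeak l) : HasPeak l.reverse := by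
  obtain ⟨s, a, b, c, t, rfl, hab, hcb⟩ := hasPeak_iff_eq_append.1 h
  exact hasPeak_iff_eq_append.2 ⟨t.reverse, c, b, a, s.reverse, by simp, hcb, hab⟩

theorem hasPeak_of_lt_of_lt_of_isChain {a b c : ℕ} {l : List ℕ} (hab : a < b) (hcb : c < b)
    (hl : (b :: (l ++ [c])).IsChain (· ≠ ·)) : HasPeak (a :: b :: (l ++ [c])) := by
  induction l generalizing a b with
  | nil => exact hasPeak_iff_eq_append.2 ⟨[], a, b, c, [], rfl, hab, hcb⟩
  | cons d l ih =>
    obtain ⟨hbd, hl⟩ := List.isChain_cons_cons.1 hl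
    rcases lt_or_gt_of_ne hbd with hbd | hdb
    · exact (ih hbd (hcb.trans hbd) hl).append_left [a]
    · exact hasPeak_iff_eq_append.2 ⟨[], a, b, d, l ++ [c], rfl, hab, hdb⟩

theorem sc231Aux_perm (input stack out : List ℕ) :
    (sc231Aux input stack out).Perm (out ++ input ++ stack) := by
  induction input, stack, out using sc231Aux.induct with
  | case1 stack out => simp [sc231Aux.eq_1]
  | case2 x rest y z s out h ih =>
    rw [sc231Aux.eq_2, if_pos h]
    refine ih.trans ?_
    simp only [List.append_assoc, List.cons_append]
    exact ((List.Perm.swap x y _).trans (List.perm_middle.symm.cons x)).append_left out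
  | case3 x rest y z s out h ih =>
    rw [sc231Aux.eq_2, if_neg h]
    refine ih.trans ?_
    simpa using List.perm_middle.append_left out
  | case4 x rest stack out h ih =>
    rw [sc231Aux.eq_3 _ _ _ _ h]
    refine ih.trans ?_
    simpa using List.perm_middle.append_left out

theorem SC231_perm (p : List ℕ) : (SC231 p).Perm p := by
  simpa [SC231] using sc231Aux_perm p [] []

theorem getLast?_sc231Aux (input stack out : List ℕ) (h : stack ≠ []) :
    (sc231Aux input stack out).getLast? = stack.getLast? := by
  induction input, stack, out using sc231Aux.induct with
  | case1 stack out =>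
    rw [sc231Aux.eq_1, List.getLast?_append]
    cases hs : stack.getLast? <;> simp_all
  | case2 x rest y z s out hxyz ih =>
    rw [sc231Aux.eq_2, if_pos hxyz, ih (List.cons_ne_nil _ _)]
    simp
  | case3 x rest y z s out hxyz ih =>
    rw [sc231Aux.eq_2, if_neg hxyz, ih (List.cons_ne_nil _ _)]
    simp
  | case4 x rest stack out hs ih =>
    rw [sc231Aux.eq_3 _ _ _ _ hs, ih (List.cons_ne_nil _ _), List.getLast?_cons]
    cases hst : stack.getLast? <;> simp_all [List.getLast?_eq_none_iff]

theorem getLast?_SC231_cons (a : ℕ) (w : List ℕ) : (SC231 (a :: w)).getLast? = some a := by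
  rw [SC231, sc231Aux.eq_3 _ _ _ _ (by simp), getLast?_sc231Aux _ _ _ (by simp)]
  rfl

/- The invariant is a peak in `stack.reverse ++ input`: a push leaves this word unchanged, and
after a pre-pop over `z < x < y` it contains the ascent `z < x` followed by a descent to the
final minimum `m`. -/
theorem hasPeak_sc231Aux {m : ℕ} {input stack : List ℕ} (out : List ℕ) (hnd : input.Nodup)
    (hmin : ∀ y ∈ input ++ stack, m ≤ y) (hlast : ∀ y ∈ input.getLast?, y = m)
    (h : HasPeak (stack.reverse ++ input)) : HasPeak (sc231Aux input stack out) := by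
  induction input, stack, out using sc231Aux.induct with
  | case1 stack out =>
    rw [sc231Aux.eq_1, ← List.reverse_reverse stack]
    exact (List.append_nil stack.reverse ▸ h).reverse.append_left out
  | case2 x rest y z s out hxyz ih =>
    rw [sc231Aux.eq_2, if_pos hxyz]
    refine ih hnd (fun u hu => hmin u (by simp_all; tauto)) hlast ?_
    have hmx : m < x := (hmin z (by simp)).trans_lt hxyz.1
    obtain ⟨l, rfl⟩ : ∃ l, rest = l ++ [m] := by
      rcases rest.eq_nil_or_concat' with rfl | ⟨l, b, rfl⟩
      · exact absurd (hlast x rfl) hmx.ne'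
      · exact ⟨l, by simpa using hlast b (by simp [List.getLast?_cons])⟩
    have hpeak := hasPeak_of_lt_of_lt_of_isChain hxyz.1 hmx hnd.isChain
    simpa using hpeak.append_left s.reverse
  | case3 x rest y z s out hxyz ih =>
    rw [sc231Aux.eq_2, if_neg hxyz]
    refine ih hnd.of_cons (fun u hu => hmin u (by simp_all; tauto)) ?_ (by simpa using h)
    intro u hu
    exact hlast u (by simp [List.getLast?_cons, Option.mem_def.1 hu])
  | case4 x rest stack out hs ih =>
    rw [sc231Aux.eq_3 _ _ _ _ hs]
    refine ih hnd.of_cons (fun u hu => hmin u (by simp_all; tauto)) ?_ (by simpa using h)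
    intro u hu
    exact hlast u (by simp [List.getLast?_cons, Option.mem_def.1 hu])

theorem HasPeak.SC231 {m : ℕ} {q : List ℕ} (hnd : q.Nodup) (hmin : ∀ y ∈ q, m ≤ y)
    (hlast : q.getLast? = some m) (h : HasPeak q) : HasPeak (SC231 q) :=
  hasPeak_sc231Aux [] hnd (by simpa using hmin) (by simp [hlast]) (by simpa using h)

theorem hasPeak_iterate_of_lt_sortNum {p : List ℕ} {k : ℕ} (h : k < sortNum p) :
    HasPeak (SC231^[k] p) :=
  not_not.1 (Nat.notMem_of_lt_sInf h)

theorem not_hasPeak_iterate_sortNum {p : List ℕ} (h : sortNum p ≠ 0) :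
    ¬ HasPeak (SC231^[sortNum p] p) :=
  Nat.sInf_mem (Nat.nonempty_of_pos_sInf (Nat.pos_of_ne_zero h))

/-- No permutation of `{1,…,n}` whose first entry is `1` has sort-number exactly `2`. -/
theorem first_entry_one_sortNum_ne_two (n : ℕ) (p : List ℕ) (hp : IsPermOf n p)
    (hhead : p.head? = some 1) : sortNum p ≠ 2 := by
  intro h
  obtain ⟨w, rfl⟩ : ∃ w, p = 1 :: w := ⟨p.tail, List.eq_cons_of_mem_head? hhead⟩
  have hq : (SC231 (1 :: w)).Perm (List.range' 1 n) := (SC231_perm _).trans hp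
  have hpeak : HasPeak (SC231 (1 :: w)) := by
    simpa using hasPeak_iterate_of_lt_sortNum (p := 1 :: w) (k := 1) (by omega)
  have hpeak₂ := hpeak.SC231 (hq.nodup_iff.2 List.nodup_range')
    (fun y hy => (List.mem_range'_1.1 (hq.subset hy)).1) (getLast?_SC231_cons 1 w)
  have hsorted := not_hasPeak_iterate_sortNum (p := 1 :: w) (by omega)
  rw [h, Function.iterate_succ_apply', Function.iterate_one] at hsorted
  exact hsorted hpeak₂
end

section
/- The permutation 1,9,8,7,6,5,4,3,2 (i.e., 1 followed by 9 down to 2) has sort-number 1 under SC_231, and its complement 9,1,2,3,4,5,6,7,8 has sort-number 0; in particular the sum of sort-numbers of a permutation and its complement can equal 1 for arbitrarily large n. -/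
/-!
`p = 1, n, n-1, …, 2` has a peak at its second entry, and `SC_231` pushes `1` and `n` and
then, for each further entry `x`, pops the entry above `1` before pushing `x` (the stack would
read `x, x+1, 1`, a consecutive `231`); so `SC_231(p) = n, n-1, …, 1`, which is peakless.
The complement `n, 1, 2, …, n-1` is already peakless.
-/

lemma HasPeak.exists_getElem {l : List ℕ} (h : HasPeak l) :
    ∃ i, ∃ hi : i + 2 < l.length, l[i] < l[i + 1] ∧ l[i + 2] < l[i + 1] := by
  obtain ⟨i, hi, h₁, h₂⟩ := h
  refine ⟨i, hi, ?_⟩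
  simp only [getElem!_pos l i (by omega), getElem!_pos l (i + 1) (by omega),
    getElem!_pos l (i + 2) hi] at h₁ h₂
  exact ⟨h₁, h₂⟩

lemma hasPeak_cons_cons_cons_s16 {a b c : ℕ} (l : List ℕ) (hab : a < b) (hcb : c < b) :
    HasPeak (a :: b :: c :: l) :=
  ⟨0, by simp, by simpa using hab, by simpa using hcb⟩

lemma not_hasPeak_of_pairwise_gt {l : List ℕ} (hl : l.Pairwise (· > ·)) : ¬ HasPeak l := by
  intro h
  obtain ⟨i, hi, hrise, -⟩ := h.exists_getElem
  exact (List.pairwise_iff_getElem.mp hl i (i + 1) (by omega) (by omega) (by omega)).asymm hrise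

lemma not_hasPeak_cons_of_pairwise_lt (a : ℕ) {l : List ℕ} (hl : l.Pairwise (· < ·)) :
    ¬ HasPeak (a :: l) := by
  intro h
  obtain ⟨i, hi, -, hfall⟩ := h.exists_getElem
  simp only [List.getElem_cons_succ] at hfall
  exact (List.pairwise_iff_getElem.mp hl i (i + 1) (by simp at hi; omega) (by simp at hi; omega)
    (by omega)).asymm hfall

lemma sc231Aux_cons_nil (x : ℕ) (rest out : List ℕ) :
    sc231Aux (x :: rest) [] out = sc231Aux rest [x] out := by
  rw [sc231Aux]; simp

lemma sc231Aux_cons_singleton (x y : ℕ) (rest out : List ℕ) :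
    sc231Aux (x :: rest) [y] out = sc231Aux rest [x, y] out := by
  rw [sc231Aux]; simp

lemma sc231Aux_of_pairwise_gt_s16 {b : ℕ} {l : List ℕ} (hl : l.Pairwise (· > ·))
    (hb : ∀ x ∈ l, b < x) (y : ℕ) (hy : ∀ x ∈ l, x < y) (out : List ℕ) :
    sc231Aux l [y, b] out = out ++ y :: l ++ [b] := by
  induction l generalizing y out with
  | nil => simp [sc231Aux]
  | cons x l ih =>
    rw [List.pairwise_cons] at hl
    have hbx : b < x := hb x (by simp)
    have hxy : x < y := hy x (by simp)
    rw [sc231Aux, if_pos ⟨hbx, hxy⟩, sc231Aux_cons_singleton,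
      ih hl.2 (fun z hz => hb z (by simp [hz])) x hl.1]
    simp

lemma SC231_cons_of_pairwise_gt {b : ℕ} {l : List ℕ} (hl : l.Pairwise (· > ·))
    (hb : ∀ x ∈ l, b < x) : SC231 (b :: l) = l ++ [b] := by
  cases l with
  | nil => simp [SC231, sc231Aux]
  | cons y l =>
    rw [List.pairwise_cons] at hl
    rw [SC231, sc231Aux_cons_nil, sc231Aux_cons_singleton,
      sc231Aux_of_pairwise_gt_s16 hl.2 (fun x hx => hb x (by simp [hx])) y hl.1]
    simp

lemma sortNum_eq_zero {p : List ℕ} (h : ¬ HasPeak p) : sortNum p = 0 :=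
  Nat.sInf_eq_zero.mpr (Or.inl h)

lemma sortNum_eq_one {p : List ℕ} (h₀ : HasPeak p) (h₁ : ¬ HasPeak (SC231 p)) :
    sortNum p = 1 := by
  have hmem : 1 ∈ {k | ¬ HasPeak (SC231^[k] p)} := h₁
  have hne : sortNum p ≠ 0 := fun h => by
    have := Nat.sInf_mem ⟨1, hmem⟩
    rw [← sortNum, h] at this
    exact this h₀
  have := Nat.sInf_le hmem
  rw [← sortNum] at this
  omega

lemma pairwise_gt_reverse_range' (s m : ℕ) : (List.range' s m).reverse.Pairwise (· > ·) :=
  List.pairwise_reverse.mpr (List.pairwise_lt_range' 1)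

lemma isPermOf_one_cons_reverse_range' (m : ℕ) :
    IsPermOf (m + 1) (1 :: (List.range' 2 m).reverse) := by
  rw [IsPermOf, List.range'_succ]
  exact (List.reverse_perm _).cons 1

lemma sortNum_one_cons_reverse_range' {m : ℕ} (hm : 2 ≤ m) :
    sortNum (1 :: (List.range' 2 m).reverse) = 1 := by
  have hgt : ∀ x ∈ (List.range' 2 m).reverse, 1 < x := by
    simp only [List.mem_reverse, List.mem_range']
    omega
  apply sortNum_eq_one
  · obtain ⟨j, rfl⟩ := Nat.exists_eq_add_of_le' hm
    rw [show (List.range' 2 (j + 2)).reverse = (j + 3) :: (j + 2) :: (List.range' 2 j).reverse by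
      simp only [List.range'_concat, List.reverse_append, List.append_assoc, List.reverse_cons,
        List.reverse_nil, List.nil_append, List.cons_append, List.cons.injEq, and_true]
      omega]
    exact hasPeak_cons_cons_cons_s16 _ (by omega) (by omega)
  · rw [SC231_cons_of_pairwise_gt (pairwise_gt_reverse_range' 2 m) hgt]
    refine not_hasPeak_of_pairwise_gt (List.pairwise_append.mpr
      ⟨pairwise_gt_reverse_range' 2 m, by simp, fun x hx y hy => ?_⟩)
    simp only [List.mem_singleton] at hy
    exact hy ▸ hgt x hx

lemma sortNum_complement_one_cons_reverse_range' (m : ℕ) :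
    sortNum ((1 :: (List.range' 2 m).reverse).map (fun i => m + 1 + 1 - i)) = 0 := by
  apply sortNum_eq_zero
  rw [List.map_cons]
  apply not_hasPeak_cons_of_pairwise_lt
  rw [List.pairwise_map]
  refine (pairwise_gt_reverse_range' 2 m).imp_of_mem fun ha _ hab => ?_
  simp only [List.mem_reverse, List.mem_range'] at ha
  omega

/-- The permutation `1,9,8,7,6,5,4,3,2` has sort-number `1`, its complement
`9,1,2,3,4,5,6,7,8` has sort-number `0`; in particular the sum of the sort-numbers of a
permutation and its complement can equal `1` for arbitrarily large `n`. -/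
theorem complement_sortNum_sum_one :
    sortNum [1, 9, 8, 7, 6, 5, 4, 3, 2] = 1 ∧
    sortNum [9, 1, 2, 3, 4, 5, 6, 7, 8] = 0 ∧
    [9, 1, 2, 3, 4, 5, 6, 7, 8] =
      List.map (fun i => 10 - i) [1, 9, 8, 7, 6, 5, 4, 3, 2] ∧
    ∀ N : ℕ, ∃ n, N ≤ n ∧ ∃ p : List ℕ, IsPermOf n p ∧
      sortNum p + sortNum (p.map (fun i => n + 1 - i)) = 1 := by
  have hp : [1, 9, 8, 7, 6, 5, 4, 3, 2] = 1 :: (List.range' 2 8).reverse := rfl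
  have hcompl : [9, 1, 2, 3, 4, 5, 6, 7, 8] =
      List.map (fun i => 10 - i) [1, 9, 8, 7, 6, 5, 4, 3, 2] := rfl
  refine ⟨hp ▸ sortNum_one_cons_reverse_range' (by norm_num), ?_, hcompl, fun N => ?_⟩
  · rw [hcompl, hp]
    exact sortNum_complement_one_cons_reverse_range' 8
  · refine ⟨N + 2 + 1, by omega, _, isPermOf_one_cons_reverse_range' (N + 2), ?_⟩
    rw [sortNum_one_cons_reverse_range' (by omega), sortNum_complement_one_cons_reverse_range']
end

section
/- Every peakless permutation of {1,...,n} is a fixed point of SC_231 composed with itself; more precisely, if p avoids both 231 and 132 as (classical) patterns, then SC_231(p) also avoids both 231 and 132, and SC_231(SC_231(p)) = p. -/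
/-- No consecutive 132 occurrence. -/
def NoC132 (l : List ℕ) : Prop :=
  ∀ u a b c v, l = u ++ a :: b :: c :: v → ¬(a < c ∧ c < b)

lemma sc231Aux_eq (input : List ℕ) : ∀ stack out : List ℕ,
    NoC132 (stack.reverse ++ input) →
    sc231Aux input stack out = out ++ input.reverse ++ stack := by
  induction input with
  | nil => intro stack out _; simp [sc231Aux]
  | cons x rest ih =>
    intro stack out h
    match stack with
    | [] =>
      rw [show sc231Aux (x::rest) [] out = sc231Aux rest [x] out from by simp [sc231Aux]]
      rw [ih [x] out (by simpa using h)]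
      simp
    | [y] =>
      rw [show sc231Aux (x::rest) [y] out = sc231Aux rest [x,y] out from by simp [sc231Aux]]
      rw [ih [x,y] out (by intro u a b c v hv hc; exact h u a b c v (by simpa using hv) hc)]
      simp
    | y :: z :: s =>
      have hnot : ¬ (z < x ∧ x < y) := by
        intro hc
        exact h s.reverse z y x rest (by simp) ⟨hc.1, hc.2⟩
      rw [show sc231Aux (x::rest) (y::z::s) out = sc231Aux rest (x::y::z::s) out from by
        rw [sc231Aux]; simp [hnot]]
      rw [ih (x::y::z::s) out (by intro u a b c v hv hc; exact h u a b c v (by simpa using hv) hc)]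
      simp

lemma contains132_iff (p : List ℕ) :
    ContainsPat p [1,3,2] ↔ ∃ a b c, [a,b,c].Sublist p ∧ a < c ∧ c < b := by
  constructor
  · rintro ⟨s, hs, hl, hord⟩
    match s, hl with
    | [a,b,c], _ =>
      refine ⟨a, b, c, hs, ?_, ?_⟩
      · have := (hord 0 2 (by simp) (by simp)).2 (by simp)
        simpa using this
      · have := (hord 2 1 (by simp) (by simp)).2 (by simp)
        simpa using this
  · rintro ⟨a, b, c, hs, h1, h2⟩
    refine ⟨[a,b,c], hs, rfl, ?_⟩
    intro i j hi hj
    simp at hi hj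
    interval_cases i <;> interval_cases j <;> simp <;> omega

lemma contains231_iff (p : List ℕ) :
    ContainsPat p [2,3,1] ↔ ∃ a b c, [a,b,c].Sublist p ∧ c < a ∧ a < b := by
  constructor
  · rintro ⟨s, hs, hl, hord⟩
    match s, hl with
    | [a,b,c], _ =>
      refine ⟨a, b, c, hs, ?_, ?_⟩
      · have := (hord 2 0 (by simp) (by simp)).2 (by simp)
        simpa using this
      · have := (hord 0 1 (by simp) (by simp)).2 (by simp)
        simpa using this
  · rintro ⟨a, b, c, hs, h1, h2⟩
    refine ⟨[a,b,c], hs, rfl, ?_⟩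
    intro i j hi hj
    simp at hi hj
    interval_cases i <;> interval_cases j <;> simp <;> omega

lemma noC132_of_avoids (p : List ℕ) (h : AvoidsPat p [1,3,2]) : NoC132 p := by
  intro u a b c v hv hc
  apply h
  rw [contains132_iff]
  refine ⟨a, b, c, ?_, hc.1, hc.2⟩
  rw [hv]
  refine List.Sublist.trans ?_ (List.sublist_append_right u _)
  simp

lemma SC231_eq_reverse (p : List ℕ) (h : AvoidsPat p [1,3,2]) : SC231 p = p.reverse := by
  have := sc231Aux_eq p [] [] (by simpa using noC132_of_avoids p h)
  simpa [SC231] using this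

lemma avoids_reverse_231 (p : List ℕ) (h : AvoidsPat p [1,3,2]) :
    AvoidsPat p.reverse [2,3,1] := by
  intro hc
  rw [contains231_iff] at hc
  obtain ⟨a, b, c, hs, h1, h2⟩ := hc
  apply h
  rw [contains132_iff]
  refine ⟨c, b, a, ?_, h1, h2⟩
  have := hs.reverse
  simpa using this

lemma avoids_reverse_132 (p : List ℕ) (h : AvoidsPat p [2,3,1]) :
    AvoidsPat p.reverse [1,3,2] := by
  intro hc
  rw [contains132_iff] at hc
  obtain ⟨a, b, c, hs, h1, h2⟩ := hc
  apply h
  rw [contains231_iff]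
  refine ⟨c, b, a, ?_, h1, h2⟩
  have := hs.reverse
  simpa using this
/-- If `p` avoids both patterns 231 and 132 (i.e. `p` is peakless), then so does
`SC_231(p)`, and `SC_231(SC_231(p)) = p`. -/
theorem SC231_on_peakless (n : ℕ) (p : List ℕ) (hp : IsPermOf n p)
    (h231 : AvoidsPat p [2, 3, 1]) (h132 : AvoidsPat p [1, 3, 2]) :
    AvoidsPat (SC231 p) [2, 3, 1] ∧ AvoidsPat (SC231 p) [1, 3, 2] ∧
      SC231 (SC231 p) = p := by
  have r132 := avoids_reverse_132 p h231
  have r231 := avoids_reverse_231 p h132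
  have e1 : SC231 p = p.reverse := SC231_eq_reverse p h132
  refine ⟨e1 ▸ r231, e1 ▸ r132, ?_⟩
  rw [e1, SC231_eq_reverse p.reverse r132, List.reverse_reverse]
end
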